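/- Let φ : Q → P be a dominating map of partially ordered sets, let W ⊆ σP, and let W^φ be the set of all countably generated ideals I of Q such that the ideal of P generated by φ[I], namely {p ∈ P : p ≤ φ(q) for some q ∈ I}, belongs to W. Then Eve has a winning strategy in BM(P, W) if and only if Eve has a winning strategy in BM(Q, W^φ). -/
import Mathlib


/-! Banach–Mazur game on a partially ordered set. -/

section BMposet

variable {P : Type*} [PartialOrder P]

/-- An ideal of a poset: downward closed and upward directed. -/
def IsIdeal (I : Set P) : Prop :=
  (∀ x ∈ I, ∀ y, y ≤ x → y ∈ I) ∧ ∀ x ∈ I, ∀ y ∈ I, ∃ z ∈ I, x ≤ z ∧ y ≤ z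

/-- A countably generated ideal: an ideal with a countable cofinal subset. -/
def IsCtblyGenIdeal (I : Set P) : Prop :=
  IsIdeal I ∧ ∃ C : Set P, C.Countable ∧ C ⊆ I ∧ ∀ x ∈ I, ∃ c ∈ C, x ≤ c

/-- The ideal generated by a play `u₀ ≤ u₁ ≤ ⋯`. -/
def playIdeal (u : ℕ → P) : Set P := {p | ∃ n, p ≤ u n}

/-- A finite sequence is increasing. -/
def IncrSeq {m : ℕ} (v : Fin m → P) : Prop := ∀ i j : Fin m, i ≤ j → v i ≤ v j

/-- A strategy for Odd: a value for every finite sequence of odd length. -/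
def OddStrategy (P : Type*) := (k : ℕ) → (Fin (2 * k + 1) → P) → P

/-- A strategy for Odd is valid if it assigns, to every finite increasing
sequence of odd length, an element above its last term. -/
def OddValid (s : OddStrategy P) : Prop :=
  ∀ (k : ℕ) (v : Fin (2 * k + 1) → P), IncrSeq v → v (Fin.last (2 * k)) ≤ s k v

/-- A play follows Odd's strategy `s` if every odd-indexed term is the value of
`s` on the preceding terms. -/
def OddFollows (u : ℕ → P) (s : OddStrategy P) : Prop :=
  ∀ k : ℕ, u (2 * k + 1) = s k (fun i => u i.val)

/-- Odd has a winning strategy in the Banach–Mazur game `BM(P, W)`. -/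
def OddWins (P : Type*) [PartialOrder P] (W : Set (Set P)) : Prop :=
  ∃ s : OddStrategy P, OddValid s ∧
    ∀ u : ℕ → P, Monotone u → OddFollows u s → playIdeal u ∈ W

/-- A strategy for Eve: a value for the empty sequence and for every finite
sequence of even positive length. -/
def EveStrategy (P : Type*) := (k : ℕ) → (Fin (2 * k) → P) → P

/-- A strategy for Eve is valid if it assigns, to every finite increasing
sequence of even length, an element above all its terms (for the empty
sequence this is no restriction). -/
def EveValid (e : EveStrategy P) : Prop :=
  ∀ (k : ℕ) (v : Fin (2 * k) → P), IncrSeq v → ∀ i : Fin (2 * k), v i ≤ e k v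

/-- A play follows Eve's strategy `e` if every even-indexed term is the value of
`e` on the preceding terms. -/
def EveFollows (u : ℕ → P) (e : EveStrategy P) : Prop :=
  ∀ k : ℕ, u (2 * k) = e k (fun i => u i.val)

/-- Eve has a winning strategy in the Banach–Mazur game `BM(P, W)`. -/
def EveWins (P : Type*) [PartialOrder P] (W : Set (Set P)) : Prop :=
  ∃ e : EveStrategy P, EveValid e ∧
    ∀ u : ℕ → P, Monotone u → EveFollows u e → playIdeal u ∉ W

end BMposet

/-- A map of posets is dominating if it is order preserving, has cofinal image,
and every element above a value `φ q` is dominated by a value `φ q'` with `q' ≥ q`. -/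
def Dominating {Q P : Type*} [PartialOrder Q] [PartialOrder P] (φ : Q → P) : Prop :=
  Monotone φ ∧ (∀ p : P, ∃ q : Q, p ≤ φ q) ∧
    ∀ (q : Q) (p : P), φ q ≤ p → ∃ q' : Q, q ≤ q' ∧ p ≤ φ q'

/-- Given `φ : Q → P` and `W ⊆ σP`, the family `W^φ` of all countably generated
ideals `I` of `Q` such that the ideal of `P` generated by `φ[I]` is in `W`. -/
def pullbackW {Q P : Type*} [PartialOrder Q] [PartialOrder P] (φ : Q → P)
    (W : Set (Set P)) : Set (Set Q) :=
  {I | IsCtblyGenIdeal I ∧ {p : P | ∃ q ∈ I, p ≤ φ q} ∈ W}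

/-! ### Auxiliary machinery -/

section Aux

open Classical

variable {Q P : Type*} [PartialOrder Q] [PartialOrder P]

/-- Extend a finite sequence to an infinite one. -/
noncomputable def extSeq {α : Type*} [Nonempty α] {m : ℕ} (v : Fin m → α) : ℕ → α :=
  fun n => if h : n < m then v ⟨n, h⟩ else Classical.arbitrary α

lemma extSeq_lt {α : Type*} [Nonempty α] {m : ℕ} (v : Fin m → α) {n : ℕ} (h : n < m) :
    extSeq v n = v ⟨n, h⟩ := dif_pos h

/-- From successive steps up to `n`, a chain inequality. -/
lemma chain_le {α : Type*} [Preorder α] (u : ℕ → α) (n : ℕ) (h : ∀ m, m < n → u m ≤ u (m + 1)) :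
    ∀ b, b ≤ n → ∀ a, a ≤ b → u a ≤ u b := by
  intro b
  induction b with
  | zero =>
    intro _ a ha
    have : a = 0 := Nat.le_zero.mp ha
    subst this; exact le_rfl
  | succ b ih =>
    intro hb a ha
    rcases Nat.eq_or_lt_of_le ha with rfl | h'
    · exact le_rfl
    · exact (ih (by omega) a (by omega)).trans (h b (by omega))

/-- A monotone play generates a countably generated ideal. -/
lemma playIdeal_ctblyGen (u : ℕ → P) (hu : Monotone u) : IsCtblyGenIdeal (playIdeal u) := by
  refine ⟨⟨?_, ?_⟩, Set.range u, Set.countable_range u, ?_, ?_⟩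
  · rintro x ⟨n, hn⟩ y hyx; exact ⟨n, hyx.trans hn⟩
  · rintro x ⟨n, hn⟩ y ⟨m, hm⟩
    exact ⟨u (max n m), ⟨max n m, le_rfl⟩, hn.trans (hu (le_max_left n m)),
      hm.trans (hu (le_max_right n m))⟩
  · rintro p ⟨n, rfl⟩; exact ⟨n, le_rfl⟩
  · rintro x ⟨n, hn⟩; exact ⟨u n, ⟨n, rfl⟩, hn⟩

/-! #### Simulated `P`-play from a `Q`-play (for the forward direction) -/

/-- The `n`-th term of the simulated `P`-play along a `Q`-play `v`. -/
noncomputable def simPaux (φ : Q → P) (e : EveStrategy P) (n : ℕ) (v : ℕ → Q) : P :=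
  if n % 2 = 1 then φ (v n)
  else e (n / 2) (fun i : Fin (2 * (n / 2)) => simPaux φ e i v)
termination_by n
decreasing_by exact i.isLt.trans_le (by omega)

lemma simPaux_odd (φ : Q → P) (e : EveStrategy P) (k : ℕ) (v : ℕ → Q) :
    simPaux φ e (2 * k + 1) v = φ (v (2 * k + 1)) := by
  rw [simPaux, if_pos (by omega : (2 * k + 1) % 2 = 1)]

lemma simPaux_even (φ : Q → P) (e : EveStrategy P) (k : ℕ) (v : ℕ → Q) :
    simPaux φ e (2 * k) v = e k (fun i : Fin (2 * k) => simPaux φ e i v) := by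
  rw [simPaux, if_neg (by omega : ¬ (2 * k) % 2 = 1)]
  exact congrArg (fun m => e m (fun i : Fin (2 * m) => simPaux φ e i v)) (by omega : 2 * k / 2 = k)

lemma simPaux_congr (φ : Q → P) (e : EveStrategy P) :
    ∀ n (v w : ℕ → Q), (∀ i, i ≤ n → v i = w i) → simPaux φ e n v = simPaux φ e n w := by
  intro n
  induction n using Nat.strong_induction_on with
  | _ n ih =>
    intro v w h
    rw [simPaux, simPaux]
    by_cases hn : n % 2 = 1
    · rw [if_pos hn, if_pos hn, h n le_rfl]
    · rw [if_neg hn, if_neg hn]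
      congr 1
      funext i
      have hi : (i : ℕ) < n := i.isLt.trans_le (by omega)
      exact ih i hi v w fun j hj => h j (hj.trans (le_of_lt hi))

lemma simPaux_congr_even (φ : Q → P) (e : EveStrategy P) (k : ℕ) (v w : ℕ → Q)
    (h : ∀ i, i < 2 * k → v i = w i) : simPaux φ e (2 * k) v = simPaux φ e (2 * k) w := by
  rw [simPaux_even, simPaux_even]
  congr 1
  funext i
  exact simPaux_congr φ e i v w fun j hj => h j (lt_of_le_of_lt hj i.isLt)

/-- Eve's strategy in `Q` induced by her strategy `e` in `P`. -/
noncomputable def pushStrat [Nonempty Q] (φ : Q → P) (e : EveStrategy P) : EveStrategy Q :=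
  fun k v =>
    if h : ∃ q : Q, (∀ i, v i ≤ q) ∧ simPaux φ e (2 * k) (extSeq v) ≤ φ q then h.choose
    else extSeq v (2 * k - 1)

lemma pushStrat_spec [Nonempty Q] (φ : Q → P) (e : EveStrategy P) {k : ℕ} {v : Fin (2 * k) → Q}
    (h : ∃ q : Q, (∀ i, v i ≤ q) ∧ simPaux φ e (2 * k) (extSeq v) ≤ φ q) :
    (∀ i, v i ≤ pushStrat φ e k v) ∧ simPaux φ e (2 * k) (extSeq v) ≤ φ (pushStrat φ e k v) := by
  simp only [pushStrat]
  rw [dif_pos h]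
  exact h.choose_spec

lemma pushStrat_valid [Nonempty Q] (φ : Q → P) (e : EveStrategy P) :
    EveValid (pushStrat φ e) := by
  intro k v hv i
  simp only [pushStrat]
  split
  · next h => exact h.choose_spec.1 i
  · have hi := i.isLt
    have hk : 2 * k - 1 < 2 * k := by omega
    rw [extSeq_lt v hk]
    exact hv i ⟨2 * k - 1, hk⟩ (Fin.le_def.mpr (by simp; omega))

/-! #### Simulated `Q`-play from a `P`-play (for the backward direction) -/

/-- The `n`-th term of the simulated `Q`-play along a `P`-play `u`. -/
noncomputable def simQaux (φ : Q → P) (e : EveStrategy Q) (n : ℕ) (u : ℕ → P) : Q :=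
  if hn : n % 2 = 1 then
    if h : ∃ q' : Q, simQaux φ e (n - 1) u ≤ q' ∧ u n ≤ φ q' then h.choose
    else simQaux φ e (n - 1) u
  else e (n / 2) (fun i : Fin (2 * (n / 2)) => simQaux φ e i u)
termination_by n
decreasing_by
  all_goals try exact i.isLt.trans_le (by omega)
  all_goals omega

lemma simQaux_even (φ : Q → P) (e : EveStrategy Q) (k : ℕ) (u : ℕ → P) :
    simQaux φ e (2 * k) u = e k (fun i : Fin (2 * k) => simQaux φ e i u) := by
  rw [simQaux, dif_neg (by omega : ¬ (2 * k) % 2 = 1)]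
  exact congrArg (fun m => e m (fun i : Fin (2 * m) => simQaux φ e i u)) (by omega : 2 * k / 2 = k)

lemma simQaux_odd_le (φ : Q → P) (e : EveStrategy Q) (k : ℕ) (u : ℕ → P) :
    simQaux φ e (2 * k) u ≤ simQaux φ e (2 * k + 1) u := by
  conv_rhs => rw [simQaux]
  rw [dif_pos (by omega : (2 * k + 1) % 2 = 1)]
  split
  · next h => exact h.choose_spec.1
  · exact le_rfl

lemma simQaux_odd_spec (φ : Q → P) (e : EveStrategy Q) (k : ℕ) (u : ℕ → P)
    (h : ∃ q' : Q, simQaux φ e (2 * k) u ≤ q' ∧ u (2 * k + 1) ≤ φ q') :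
    u (2 * k + 1) ≤ φ (simQaux φ e (2 * k + 1) u) := by
  conv_rhs => rw [simQaux]
  rw [dif_pos (by omega : (2 * k + 1) % 2 = 1)]
  rw [Nat.add_sub_cancel]
  rw [dif_pos h]
  exact h.choose_spec.2

lemma simQaux_mono (φ : Q → P) (e : EveStrategy Q) (he : EveValid e) (u : ℕ → P) :
    ∀ n, simQaux φ e n u ≤ simQaux φ e (n + 1) u := by
  intro n
  induction n using Nat.strong_induction_on with
  | _ n ih =>
    rcases Nat.even_or_odd' n with ⟨k, hk | hk⟩
    · subst hk
      exact simQaux_odd_le φ e k u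
    · subst hk
      rw [show 2 * k + 1 + 1 = 2 * (k + 1) by omega, simQaux_even]
      have hinc : IncrSeq (fun i : Fin (2 * (k + 1)) => simQaux φ e i u) := by
        intro i j hij
        have hj := j.isLt
        exact chain_le (fun m => simQaux φ e m u) (2 * k + 1) (fun m hm => ih m hm)
          j (by omega) i (Fin.le_def.mp hij)
      exact he (k + 1) _ hinc ⟨2 * k + 1, by omega⟩

lemma simQaux_congr (φ : Q → P) (e : EveStrategy Q) :
    ∀ n (u w : ℕ → P), (∀ i, i ≤ n → u i = w i) → simQaux φ e n u = simQaux φ e n w := by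
  intro n
  induction n using Nat.strong_induction_on with
  | _ n ih =>
    intro u w h
    by_cases hn : n % 2 = 1
    · have h1 : simQaux φ e (n - 1) u = simQaux φ e (n - 1) w :=
        ih (n - 1) (by omega) u w fun j hj => h j (by omega)
      have h2 : u n = w n := h n le_rfl
      conv_lhs => rw [simQaux]
      conv_rhs => rw [simQaux]
      rw [dif_pos hn, dif_pos hn]
      simp only [h1, h2]
    · conv_lhs => rw [simQaux]
      conv_rhs => rw [simQaux]
      rw [dif_neg hn, dif_neg hn]
      congr 1
      funext i
      have hi : (i : ℕ) < n := i.isLt.trans_le (by omega)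
      exact ih i hi u w fun j hj => h j (hj.trans (le_of_lt hi))

lemma simQaux_congr_even (φ : Q → P) (e : EveStrategy Q) (k : ℕ) (u w : ℕ → P)
    (h : ∀ i, i < 2 * k → u i = w i) : simQaux φ e (2 * k) u = simQaux φ e (2 * k) w := by
  rw [simQaux_even, simQaux_even]
  congr 1
  funext i
  exact simQaux_congr φ e i u w fun j hj => h j (lt_of_le_of_lt hj i.isLt)

/-- Eve's strategy in `P` induced by her strategy `e` in `Q`. -/
noncomputable def pullStrat [Nonempty P] (φ : Q → P) (e : EveStrategy Q) : EveStrategy P :=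
  fun k w =>
    if ∀ i, w i ≤ φ (simQaux φ e (2 * k) (extSeq w)) then φ (simQaux φ e (2 * k) (extSeq w))
    else extSeq w (2 * k - 1)

lemma pullStrat_valid [Nonempty P] (φ : Q → P) (e : EveStrategy Q) :
    EveValid (pullStrat φ e) := by
  intro k w hw i
  simp only [pullStrat]
  split
  · next h => exact h i
  · have hi := i.isLt
    have hk : 2 * k - 1 < 2 * k := by omega
    rw [extSeq_lt w hk]
    exact hw i ⟨2 * k - 1, hk⟩ (Fin.le_def.mpr (by simp; omega))

/-! #### The two directions -/

lemma eve_forward [Nonempty Q] {φ : Q → P} (hφ : Dominating φ) (W : Set (Set P))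
    (hE : EveWins P W) : EveWins Q (pullbackW φ W) := by
  obtain ⟨e, he, hwin⟩ := hE
  refine ⟨pushStrat φ e, pushStrat_valid φ e, ?_⟩
  intro v hv hfol
  set u : ℕ → P := fun n => simPaux φ e n v with hu
  have hodd : ∀ k, u (2 * k + 1) = φ (v (2 * k + 1)) := fun k => simPaux_odd φ e k v
  have heven' : ∀ k, u (2 * k) = e k (fun i : Fin (2 * k) => u i.val) := fun k =>
    simPaux_even φ e k v
  have hext : ∀ k, simPaux φ e (2 * k) (extSeq (fun i : Fin (2 * k) => v i.val)) = u (2 * k) := by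
    intro k
    exact simPaux_congr_even φ e k _ v fun i hi => extSeq_lt _ hi
  have hcond : ∀ k, (∀ m, m < 2 * k → u m ≤ u (m + 1)) →
      ∃ q : Q, (∀ i : Fin (2 * k), (fun i : Fin (2 * k) => v i.val) i ≤ q) ∧
        simPaux φ e (2 * k) (extSeq (fun i : Fin (2 * k) => v i.val)) ≤ φ q := by
    intro k hm
    by_cases hk : k = 0
    · subst hk
      obtain ⟨q, hq⟩ := hφ.2.1 (simPaux φ e (2 * 0) (extSeq (fun i : Fin (2 * 0) => v i.val)))
      exact ⟨q, fun i => absurd i.isLt (by omega), hq⟩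
    · have h1 : u (2 * k - 1) ≤ u (2 * k) := by
        rw [heven' k]
        have hinc : IncrSeq (fun i : Fin (2 * k) => u i.val) := by
          intro i j hij
          have hj := j.isLt
          exact chain_le u (2 * k) hm j (by omega) i (Fin.le_def.mp hij)
        exact he k _ hinc ⟨2 * k - 1, by omega⟩
      have h2 : φ (v (2 * k - 1)) ≤ u (2 * k) := by
        have e1 : 2 * k - 1 = 2 * (k - 1) + 1 := by omega
        calc φ (v (2 * k - 1)) = u (2 * k - 1) := by rw [e1, hodd]
          _ ≤ u (2 * k) := h1
      obtain ⟨q', hq1, hq2⟩ := hφ.2.2 (v (2 * k - 1)) (u (2 * k)) h2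
      refine ⟨q', fun i => le_trans (hv ?_) hq1, ?_⟩
      · have := i.isLt; omega
      · rw [hext k]; exact hq2
  have hstepv : ∀ k, (∀ m, m < 2 * k → u m ≤ u (m + 1)) → u (2 * k) ≤ φ (v (2 * k)) := by
    intro k hm
    have hc := hcond k hm
    have hsp := (pushStrat_spec φ e hc).2
    rw [hext k] at hsp
    rw [hfol k]
    exact hsp
  have hstep : ∀ n, u n ≤ u (n + 1) := by
    intro n
    induction n using Nat.strong_induction_on with
    | _ n ih =>
      rcases Nat.even_or_odd' n with ⟨k, hk | hk⟩
      · subst hk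
        have h1 := hstepv k (fun m hm => ih m hm)
        calc u (2 * k) ≤ φ (v (2 * k)) := h1
          _ ≤ φ (v (2 * k + 1)) := hφ.1 (hv (Nat.le_succ _))
          _ = u (2 * k + 1) := (hodd k).symm
      · subst hk
        rw [show 2 * k + 1 + 1 = 2 * (k + 1) by omega, heven' (k + 1)]
        have hinc : IncrSeq (fun i : Fin (2 * (k + 1)) => u i.val) := by
          intro i j hij
          have hj := j.isLt
          exact chain_le u (2 * k + 1) (fun m hm => ih m hm) j (by omega) i (Fin.le_def.mp hij)
        exact he (k + 1) _ hinc ⟨2 * k + 1, by omega⟩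
  have humono : Monotone u := monotone_nat_of_le_succ hstep
  have hru := hwin u humono heven'
  intro hmem
  obtain ⟨hI, hinW⟩ := hmem
  apply hru
  have hset : {p : P | ∃ q ∈ playIdeal v, p ≤ φ q} = playIdeal u := by
    ext p
    constructor
    · rintro ⟨q, ⟨n, hqn⟩, hpq⟩
      refine ⟨2 * n + 1, ?_⟩
      calc p ≤ φ q := hpq
        _ ≤ φ (v (2 * n + 1)) := hφ.1 (hqn.trans (hv (by omega)))
        _ = u (2 * n + 1) := (hodd n).symm
    · rintro ⟨n, hpn⟩
      rcases Nat.even_or_odd' n with ⟨k, hk | hk⟩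
      · subst hk
        exact ⟨v (2 * k), ⟨2 * k, le_rfl⟩,
          hpn.trans (hstepv k (fun m _ => hstep m))⟩
      · subst hk
        exact ⟨v (2 * k + 1), ⟨2 * k + 1, le_rfl⟩, hpn.trans (le_of_eq (hodd k))⟩
  rw [← hset]
  exact hinW

lemma eve_backward [Nonempty P] {φ : Q → P} (hφ : Dominating φ) (W : Set (Set P))
    (hE : EveWins Q (pullbackW φ W)) : EveWins P W := by
  obtain ⟨e, he, hwin⟩ := hE
  refine ⟨pullStrat φ e, pullStrat_valid φ e, ?_⟩
  intro w hw hfol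
  set q : ℕ → Q := fun n => simQaux φ e n w with hq
  have qmono : Monotone q := monotone_nat_of_le_succ (simQaux_mono φ e he w)
  have hext : ∀ k, simQaux φ e (2 * k) (extSeq (fun i : Fin (2 * k) => w i.val)) = q (2 * k) := by
    intro k
    exact simQaux_congr_even φ e k _ w fun i hi => extSeq_lt _ hi
  have key : ∀ n, w n ≤ φ (q n) ∧ (n % 2 = 0 → w n = φ (q n)) := by
    intro n
    induction n using Nat.strong_induction_on with
    | _ n ih =>
      rcases Nat.even_or_odd' n with ⟨k, hk | hk⟩
      · subst hk
        have heq : w (2 * k) = φ (q (2 * k)) := by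
          have hcondi : ∀ i : Fin (2 * k), (fun i : Fin (2 * k) => w i.val) i ≤
              φ (simQaux φ e (2 * k) (extSeq (fun i : Fin (2 * k) => w i.val))) := by
            intro i
            rw [hext k]
            have hi := i.isLt
            calc w i.val ≤ φ (q i.val) := (ih i.val hi).1
              _ ≤ φ (q (2 * k)) := hφ.1 (qmono (le_of_lt hi))
          rw [hfol k]
          simp only [pullStrat]
          rw [if_pos hcondi, hext k]
        exact ⟨le_of_eq heq, fun _ => heq⟩
      · subst hk
        have h2k := (ih (2 * k) (by omega)).2 (by omega)
        have hcond : ∃ q' : Q, q (2 * k) ≤ q' ∧ w (2 * k + 1) ≤ φ q' := by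
          apply hφ.2.2
          rw [← h2k]
          exact hw (Nat.le_succ _)
        refine ⟨simQaux_odd_spec φ e k w hcond, fun hcontra => absurd hcontra (by omega)⟩
  have qfol : EveFollows q e := fun k => simQaux_even φ e k w
  have hnq := hwin q qmono qfol
  intro hmem
  apply hnq
  refine ⟨playIdeal_ctblyGen q qmono, ?_⟩
  have hset : {p : P | ∃ q' ∈ playIdeal q, p ≤ φ q'} = playIdeal w := by
    ext p
    constructor
    · rintro ⟨q', ⟨n, hn⟩, hp⟩
      refine ⟨2 * n, ?_⟩
      rw [(key (2 * n)).2 (by omega)]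
      exact hp.trans (hφ.1 (hn.trans (qmono (by omega))))
    · rintro ⟨n, hn⟩
      exact ⟨q n, ⟨n, le_rfl⟩, hn.trans (key n).1⟩
  rw [hset]
  exact hmem

end Aux

/-- For a dominating map `φ : Q → P` and `W ⊆ σP`, Eve has a
winning strategy in `BM(P, W)` iff Eve has a winning strategy in `BM(Q, W^φ)`. -/
theorem eve_wins_iff_of_dominating {Q P : Type*} [PartialOrder Q] [PartialOrder P]
    (φ : Q → P) (hφ : Dominating φ) (W : Set (Set P))
    (hW : ∀ I ∈ W, IsCtblyGenIdeal I) :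
    EveWins P W ↔ EveWins Q (pullbackW φ W) := by
  by_cases hQ : Nonempty Q
  · haveI := hQ
    haveI : Nonempty P := ⟨φ (Classical.arbitrary Q)⟩
    exact ⟨fun h => eve_forward hφ W h, fun h => eve_backward hφ W h⟩
  · constructor
    · rintro ⟨e, -, -⟩
      obtain ⟨q, -⟩ := hφ.2.1 (e 0 (fun i => absurd i.isLt (by omega)))
      exact (hQ ⟨q⟩).elim
    · rintro ⟨e, -, -⟩
      exact (hQ ⟨e 0 (fun i => absurd i.isLt (by omega))⟩).elim
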